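/- Let X ≥ 100, let α = (α₁,α₂,α₃,α₄) ∈ ℂ⁴ with |αᵢ| ≤ 1/log X for each i, let Φ : (0,∞) → ℝ be smooth and compactly supported, let r ∈ {1,2,3,4}, and fix εⱼ ∈ {±1} and uⱼ ∈ ℂ with Re(uⱼ) ≥ 0 for each j ≠ r. Define F₁(u; α; ε) := (4X/π²) · (8X)^{(u₁+u₂+u₃+u₄)/2} · ∏_{i=1}^4 g_{εᵢαᵢ}(uᵢ) · ( ∫₀^∞ Φ_ε(x) x^{(u₁+u₂+u₃+u₄)/2} dx ) · H₂(1/2+ε₁α₁+u₁, 1/2+ε₂α₂+u₂, 1/2+ε₃α₃+u₃, 1/2+ε₄α₄+u₄). Then Σ_{ε_r ∈ {±1}} (8X)^{−(1−ε_r)α_r/2} · λ(α_r)^{(1−ε_r)/2} · ε_r · [ F₁(u; α; ε) evaluated at u_r = −ε_r α_r ] = 0. -/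

import Mathlib

open Real MeasureTheory
open scoped Classical

noncomputable section

/-- `g_α(s) = π^{-s/2} Γ((1/2+α+s)/2) / Γ((1/2+α)/2)`. -/
def galpha (α s : ℂ) : ℂ :=
  (π : ℂ) ^ (-s / 2) * Complex.Gamma ((1 / 2 + α + s) / 2) / Complex.Gamma ((1 / 2 + α) / 2)

/-- `λ(α) = π^α Γ((1/2-α)/2) / Γ((1/2+α)/2)`. -/
def lam (α : ℂ) : ℂ :=
  (π : ℂ) ^ α * Complex.Gamma ((1 / 2 - α) / 2) / Complex.Gamma ((1 / 2 + α) / 2)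

/-- `Φ_ε(x) = x^{-Σᵢ (1-εᵢ)αᵢ/2} Φ(x)`. -/
def PhiEps (Φ : ℝ → ℝ) (α ε : Fin 4 → ℂ) (x : ℝ) : ℂ :=
  (x : ℂ) ^ (-(∑ i, (1 - ε i) * α i / 2)) * ((Φ x : ℝ) : ℂ)

/-- The combinatorial factor `C_p(u)`. -/
def Cp (p : ℕ) (u : Fin 4 → ℂ) : ℂ :=
  (∏ i : Fin 4, ∏ j : Fin 4, if i < j then 1 - (p : ℂ) ^ (-(u i + u j)) else 1) *
    ∑ A : Finset (Fin 4), if Even A.card then ∏ i ∈ A, (p : ℂ) ^ (-(u i)) else 0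

/-- The Euler factor at `p` of the product defining `H_ℓ`. -/
def Hfactor (g : ℕ → ℂ) (u : Fin 4 → ℂ) (p : ℕ) : ℂ :=
  (1 - g p) * (∏ i : Fin 4, ∏ j : Fin 4, if i ≤ j then 1 - (p : ℂ) ^ (-(u i + u j)) else 1) +
    g p * Cp p u

/-- The Euler product over odd primes. -/
def HEuler (g : ℕ → ℂ) (u : Fin 4 → ℂ) : ℂ :=
  ∏' p : {p : ℕ // p.Prime ∧ p ≠ 2}, Hfactor g u p.1

/-- `g₂(p) = 1 - 1/(p+1)`. -/
def g2fun (p : ℕ) : ℂ := 1 - 1 / ((p : ℂ) + 1)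

/-- The function `H₂`. -/
def H2 (u : Fin 4 → ℂ) : ℂ := HEuler g2fun u

/-- The function `F₁(u; α; ε)` (depending also on `Φ` and `X`). -/
def F1 (Φ : ℝ → ℝ) (X : ℝ) (α ε u : Fin 4 → ℂ) : ℂ :=
  ((4 * X / π ^ 2 : ℝ) : ℂ) * ((8 * X : ℝ) : ℂ) ^ (∑ i, u i / 2) *
    (∏ i, galpha (ε i * α i) (u i)) *
    (∫ x in Set.Ioi (0 : ℝ), PhiEps Φ α ε x * (x : ℂ) ^ (∑ i, u i / 2)) *
    H2 fun i => 1 / 2 + ε i * α i + u i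

lemma re_half (z : ℂ) : (z / 2).re = z.re / 2 := by
  rw [Complex.div_re]; simp [Complex.normSq]; ring

lemma galpha_key {a : ℂ} (ha : ‖a‖ < 1/2) : galpha a (-a) = lam a * galpha (-a) a := by
  have hre : |a.re| ≤ ‖a‖ := Complex.abs_re_le_norm a
  have hΓm : Complex.Gamma ((1/2 - a)/2) ≠ 0 := by
    apply Complex.Gamma_ne_zero_of_re_pos
    rw [re_half]
    have h : ((1:ℂ)/2 - a).re = 1/2 - a.re := by simp
    rw [h]
    have := abs_le.mp hre
    linarith [this.2]
  have hΓp : Complex.Gamma ((1/2 + a)/2) ≠ 0 := by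
    apply Complex.Gamma_ne_zero_of_re_pos
    rw [re_half]
    have h : ((1:ℂ)/2 + a).re = 1/2 + a.re := by simp
    rw [h]
    have := abs_le.mp hre
    linarith [this.1]
  have h3 : ((1:ℂ)/2 + -a)/2 = (1/2 - a)/2 := by ring
  have hπ : (π : ℂ) ≠ 0 := by exact_mod_cast Real.pi_ne_zero
  have h5 : (π:ℂ)^a * (π:ℂ)^(-a/2) = (π:ℂ)^(a/2) := by
    rw [← Complex.cpow_add _ _ hπ]; congr 1; ring
  have hΓm' : Complex.Gamma (1/4 + a*(-1/2)) ≠ 0 := by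
    rw [show (1/4 + a*(-1/2):ℂ) = (1/2-a)/2 by ring]; exact hΓm
  rw [galpha, galpha, lam, h3]
  field_simp
  rw [← h5]
  ring_nf
  rw [mul_assoc _ (Complex.Gamma (1/4 + a*(-1/2))) _, mul_inv_cancel₀ hΓm', mul_one]

theorem F1_cancellation (X : ℝ) (hX : 100 ≤ X)
    (α : Fin 4 → ℂ) (hα : ∀ i, ‖α i‖ ≤ 1 / Real.log X)
    (Φ : ℝ → ℝ) (hΦ : ContDiff ℝ ((⊤ : ℕ∞) : WithTop ℕ∞) Φ) (hΦc : HasCompactSupport Φ)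
    (hΦsupp : Function.support Φ ⊆ Set.Ioi 0)
    (r : Fin 4) (ε u : Fin 4 → ℂ)
    (hε : ∀ j, j ≠ r → ε j = 1 ∨ ε j = -1)
    (hu : ∀ j, j ≠ r → 0 ≤ (u j).re) :
    ∑ er ∈ ({1, -1} : Finset ℤ),
      ((8 * X : ℝ) : ℂ) ^ (-(1 - (er : ℂ)) * α r / 2) * lam (α r) ^ ((1 - (er : ℂ)) / 2) *
        (er : ℂ) *
        F1 Φ X α (Function.update ε r (er : ℂ))
          (Function.update u r (-((er : ℂ) * α r))) = 0 := by
  have hX0 : (0:ℝ) < X := by linarith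
  have hlog : (2:ℝ) < Real.log X := by
    rw [Real.lt_log_iff_exp_lt hX0]
    have h1 := Real.exp_one_lt_d9
    have h2 : Real.exp 2 = Real.exp 1 * Real.exp 1 := by
      rw [← Real.exp_add]; norm_num
    nlinarith [Real.exp_pos 1]
  have habs : ‖α r‖ < 1/2 := by
    have h1 := hα r
    have h2 : 1 / Real.log X < 1/2 := by
      rw [div_lt_div_iff₀ (by linarith) (by norm_num)]; linarith
    linarith
  have h8X : ((8*X : ℝ) : ℂ) ≠ 0 := by
    exact_mod_cast ne_of_gt (by linarith : (0:ℝ) < 8*X)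
  rw [Finset.sum_insert (by norm_num), Finset.sum_singleton]
  simp only [Int.cast_one, Int.cast_neg, one_mul, neg_mul, neg_neg]
  rw [show (-((1 - (1:ℂ)) * α r) / 2) = 0 by ring,
      show ((1 - (1:ℂ))/2) = 0 by ring,
      show (-((1 - (-1:ℂ)) * α r) / 2) = -α r by ring,
      show ((1 - (-1:ℂ))/2) = 1 by ring,
      Complex.cpow_zero, Complex.cpow_zero, Complex.cpow_one]
  suffices h : F1 Φ X α (Function.update ε r 1) (Function.update u r (-α r)) =
      ((8*X : ℝ) : ℂ) ^ (-α r) * lam (α r) *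
        F1 Φ X α (Function.update ε r (-1)) (Function.update u r (α r)) by
    rw [h]; ring
  -- sum decompositions
  have hsum : ∀ c : ℂ, ∑ i, Function.update u r c i / 2
      = c / 2 + ∑ i ∈ Finset.univ.erase r, u i / 2 := by
    intro c
    rw [← Finset.add_sum_erase _ (fun i => Function.update u r c i / 2) (Finset.mem_univ r)]
    congr 1
    · rw [Function.update_self]
    · exact Finset.sum_congr rfl fun i hi => by
        rw [Function.update_of_ne (Finset.ne_of_mem_erase hi)]
  have hA : ∀ c : ℂ, ∑ i, (1 - Function.update ε r c i) * α i / 2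
      = (1 - c) * α r / 2 + ∑ i ∈ Finset.univ.erase r, (1 - ε i) * α i / 2 := by
    intro c
    rw [← Finset.add_sum_erase _ (fun i => (1 - Function.update ε r c i) * α i / 2)
      (Finset.mem_univ r)]
    congr 1
    · rw [Function.update_self]
    · exact Finset.sum_congr rfl fun i hi => by
        rw [Function.update_of_ne (Finset.ne_of_mem_erase hi)]
  have hpow : ((8*X : ℝ) : ℂ) ^ (∑ i, Function.update u r (-α r) i / 2)
      = ((8*X : ℝ) : ℂ) ^ (-α r) * ((8*X : ℝ) : ℂ) ^ (∑ i, Function.update u r (α r) i / 2) := by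
    rw [hsum, hsum, ← Complex.cpow_add _ _ h8X]
    congr 1; ring
  have hprod : (∏ i, galpha (Function.update ε r 1 i * α i) (Function.update u r (-α r) i))
      = lam (α r) *
        ∏ i, galpha (Function.update ε r (-1) i * α i) (Function.update u r (α r) i) := by
    rw [← Finset.mul_prod_erase _
        (fun i => galpha (Function.update ε r 1 i * α i) (Function.update u r (-α r) i))
        (Finset.mem_univ r),
      ← Finset.mul_prod_erase _
        (fun i => galpha (Function.update ε r (-1) i * α i) (Function.update u r (α r) i))
        (Finset.mem_univ r)]
    have hrest : (∏ i ∈ Finset.univ.erase r,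
          galpha (Function.update ε r 1 i * α i) (Function.update u r (-α r) i))
        = ∏ i ∈ Finset.univ.erase r,
          galpha (Function.update ε r (-1) i * α i) (Function.update u r (α r) i) :=
      Finset.prod_congr rfl fun i hi => by
        rw [Function.update_of_ne (Finset.ne_of_mem_erase hi),
          Function.update_of_ne (Finset.ne_of_mem_erase hi),
          Function.update_of_ne (Finset.ne_of_mem_erase hi),
          Function.update_of_ne (Finset.ne_of_mem_erase hi)]
    simp only [Function.update_self]
    rw [hrest, one_mul, ← mul_assoc]
    congr 1
    rw [show ((-1 : ℂ)) * α r = -(α r) by ring]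
    exact galpha_key habs
  have hint : (∫ x in Set.Ioi (0:ℝ), PhiEps Φ α (Function.update ε r 1) x *
        (x : ℂ) ^ (∑ i, Function.update u r (-α r) i / 2))
      = ∫ x in Set.Ioi (0:ℝ), PhiEps Φ α (Function.update ε r (-1)) x *
        (x : ℂ) ^ (∑ i, Function.update u r (α r) i / 2) := by
    apply MeasureTheory.setIntegral_congr_fun measurableSet_Ioi
    intro x hx
    have hx0 : (x : ℂ) ≠ 0 := Complex.ofReal_ne_zero.mpr (ne_of_gt hx)
    simp only [PhiEps]
    rw [mul_right_comm, ← Complex.cpow_add _ _ hx0,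
      mul_right_comm, ← Complex.cpow_add _ _ hx0]
    congr 2
    rw [hsum, hsum, hA, hA]
    ring
  have hH : (fun i => 1/2 + Function.update ε r 1 i * α i + Function.update u r (-α r) i)
      = fun i => 1/2 + Function.update ε r (-1) i * α i + Function.update u r (α r) i := by
    funext i
    rcases eq_or_ne i r with h | h
    · subst h
      simp only [Function.update_self]
      ring
    · rw [Function.update_of_ne h, Function.update_of_ne h,
        Function.update_of_ne h, Function.update_of_ne h]
  rw [F1, F1, hprod, hint, hH, hpow]
  ring
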